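/- For all x ≥ 0, g(x) ≥ g₂(x), where g(x) = (1+x)·log(1+x) − x and g₂(x) = x + 1 − √(1+2x). -/

import Mathlib

/-!
Both sides are compared with `x ^ 2 / (x + 2)`. The Padé-type bound `log (1 + x) ≥ 2x / (x + 2)`
gives `g x ≥ x ^ 2 / (x + 2)`, while `√(1 + 2x) ≥ (3x + 2) / (x + 2)`, because
`(1 + 2x)(x + 2)² - (3x + 2)² = 2x³ ≥ 0`, gives `g₂ x ≤ x ^ 2 / (x + 2)`.
-/

open Real

lemma sq_div_add_two_le_one_add_mul_log_sub {x : ℝ} (hx : 0 ≤ x) :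
    x ^ 2 / (x + 2) ≤ (1 + x) * log (1 + x) - x := by
  have hlog : (1 + x) * (2 * x / (x + 2)) ≤ (1 + x) * log (1 + x) :=
    mul_le_mul_of_nonneg_left (le_log_one_add_of_nonneg hx) (by linarith)
  have hx2 : x + 2 ≠ 0 := by positivity
  calc x ^ 2 / (x + 2) = (1 + x) * (2 * x / (x + 2)) - x := by field_simp; ring
    _ ≤ (1 + x) * log (1 + x) - x := by linarith

lemma div_add_two_le_sqrt_one_add_two_mul {x : ℝ} (hx : 0 ≤ x) :
    (3 * x + 2) / (x + 2) ≤ √(1 + 2 * x) := by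
  rw [le_sqrt (by positivity) (by linarith), div_pow, div_le_iff₀ (by positivity)]
  nlinarith [pow_nonneg hx 3]

lemma add_one_sub_sqrt_le_sq_div_add_two {x : ℝ} (hx : 0 ≤ x) :
    x + 1 - √(1 + 2 * x) ≤ x ^ 2 / (x + 2) := by
  have hx2 : x + 2 ≠ 0 := by positivity
  calc x + 1 - √(1 + 2 * x) ≤ x + 1 - (3 * x + 2) / (x + 2) := by
        linarith [div_add_two_le_sqrt_one_add_two_mul hx]
    _ = x ^ 2 / (x + 2) := by field_simp; ring

theorem bennett_ge_g2 (x : ℝ) (hx : 0 ≤ x) :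
    (1 + x) * Real.log (1 + x) - x ≥ x + 1 - Real.sqrt (1 + 2 * x) :=
  (add_one_sub_sqrt_le_sq_div_add_two hx).trans (sq_div_add_two_le_one_add_mul_log_sub hx)
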